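/- Let F be a field and O the split octonion algebra over F. For every v ∈ F³, the map δ₂(v) : O → O defined by (α', u', v', β') ↦ (α' + u'·v, u' + v'×v, (−α' + β' − u'·v)v + v', β' − u'·v) is an F-algebra automorphism of O, i.e. an F-linear bijection satisfying δ₂(v)(a b) = δ₂(v)(a) δ₂(v)(b) for all a, b ∈ O. -/

import Mathlib

namespace OctoPaper

variable (F : Type*) [Field F]

/-- The split (Zorn matrix) octonion algebra over `F`. -/
structure Octo where
  x1 : F
  u : Fin 3 → F
  v : Fin 3 → F
  x8 : F

variable {F}

/-- Dot product on `F³`. -/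
def dot (u v : Fin 3 → F) : F := u 0 * v 0 + u 1 * v 1 + u 2 * v 2

/-- Cross product on `F³`. -/
def cross (u v : Fin 3 → F) : Fin 3 → F :=
  ![u 1 * v 2 - u 2 * v 1, u 2 * v 0 - u 0 * v 2, u 0 * v 1 - u 1 * v 0]

instance : Mul (Octo F) where
  mul x y :=
    ⟨x.x1 * y.x1 + dot x.u y.v,
     fun i => x.x1 * y.u i + y.x8 * x.u i - cross x.v y.v i,
     fun i => y.x1 * x.v i + x.x8 * y.v i + cross x.u y.u i,
     x.x8 * y.x8 + dot x.v y.u⟩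

instance : Add (Octo F) where add x y := ⟨x.x1 + y.x1, x.u + y.u, x.v + y.v, x.x8 + y.x8⟩
instance : Neg (Octo F) where neg x := ⟨-x.x1, -x.u, -x.v, -x.x8⟩
instance : Sub (Octo F) where sub x y := x + -y
instance : SMul F (Octo F) where smul c x := ⟨c * x.x1, c • x.u, c • x.v, c * x.x8⟩
instance : One (Octo F) where one := ⟨1, 0, 0, 1⟩
instance : Zero (Octo F) where zero := ⟨0, 0, 0, 0⟩

/-- Trace of an octonion. -/
def tr (x : Octo F) : F := x.x1 + x.x8

/-- Norm of an octonion. -/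
def onorm (x : Octo F) : F := x.x1 * x.x8 - dot x.u x.v

/-- Conjugate of an octonion. -/
def conj (x : Octo F) : Octo F := ⟨x.x8, -x.u, -x.v, x.x1⟩

/-- `g` is an `F`-algebra automorphism of the split octonion algebra:
an `F`-linear bijection preserving multiplication. -/
def IsAut (g : Octo F → Octo F) : Prop :=
  Function.Bijective g ∧
  (∀ x y : Octo F, g (x + y) = g x + g y) ∧
  (∀ (c : F) (x : Octo F), g (c • x) = c • g x) ∧
  (∀ x y : Octo F, g (x * y) = g x * g y)

/-- The automorphism `ρ(g)` of `O` attached to `g ∈ SL₃(F)`. -/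
def rho (g : Matrix.SpecialLinearGroup (Fin 3) F) (x : Octo F) : Octo F :=
  ⟨x.x1, Matrix.vecMul x.u (g : Matrix (Fin 3) (Fin 3) F),
   Matrix.vecMul x.v (Matrix.transpose (↑(g⁻¹) : Matrix (Fin 3) (Fin 3) F)), x.x8⟩

/-- The automorphism `ℏ` of `O`. -/
def hbar (x : Octo F) : Octo F := ⟨x.x8, -x.v, -x.u, x.x1⟩

/-- The automorphism `δ₁(u)` of `O`. -/
def delta1 (w : Fin 3 → F) (y : Octo F) : Octo F :=
  ⟨y.x1 - dot w y.v,
   fun i => (y.x1 - y.x8 - dot w y.v) * w i + y.u i,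
   fun i => y.v i - cross y.u w i,
   y.x8 + dot w y.v⟩

/-- The automorphism `δ₂(v)` of `O`. -/
def delta2 (w : Fin 3 → F) (y : Octo F) : Octo F :=
  ⟨y.x1 + dot y.u w,
   fun i => y.u i + cross y.v w i,
   fun i => (-y.x1 + y.x8 - dot y.u w) * w i + y.v i,
   y.x8 - dot y.u w⟩

end OctoPaper

open OctoPaper

/-! Additivity and homogeneity of `δ₂(v)` are immediate from its formula, and `δ₂(-v)` inverts it
because `v × v = 0` and `(z × v) · v = 0`. Multiplicativity reduces, component by component, to
the antisymmetry of the scalar triple product and the expansion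
`a × (b × c) = (a · c) b - (a · b) c` of the vector triple product. -/

open Matrix

section CrossProduct

variable {R : Type*} [CommRing R]

theorem cross_dot_right_self (v w : Fin 3 → R) : v ⨯₃ w ⬝ᵥ w = 0 := by
  rw [dotProduct_comm, dot_cross_self]

theorem cross_dot_comm (u v w : Fin 3 → R) : u ⨯₃ v ⬝ᵥ w = -(u ⨯₃ w ⬝ᵥ v) := by
  rw [dotProduct_comm, triple_product_permutation, dotProduct_comm (u ⨯₃ w),
    triple_product_permutation v, ← cross_anticomm v w, dotProduct_neg, neg_neg]

end CrossProduct

namespace OctoPaper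

variable {F : Type*} [Field F]

theorem dot_eq_dotProduct (u w : Fin 3 → F) : dot u w = u ⬝ᵥ w := (vec3_dotProduct u w).symm

theorem mk_add_mk (a b a' b' : F) (u z u' z' : Fin 3 → F) :
    (⟨a, u, z, b⟩ + ⟨a', u', z', b'⟩ : Octo F) = ⟨a + a', u + u', z + z', b + b'⟩ := rfl

theorem smul_mk (c a b : F) (u z : Fin 3 → F) :
    c • (⟨a, u, z, b⟩ : Octo F) = ⟨c * a, c • u, c • z, c * b⟩ := rfl

theorem mk_mul_mk (a b a' b' : F) (u z u' z' : Fin 3 → F) :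
    (⟨a, u, z, b⟩ * ⟨a', u', z', b'⟩ : Octo F) =
      ⟨a * a' + u ⬝ᵥ z', a • u' + b' • u - z ⨯₃ z', a' • z + b • z' + u ⨯₃ u',
        b * b' + z ⬝ᵥ u'⟩ := by
  rw [← dot_eq_dotProduct, ← dot_eq_dotProduct]
  rfl

theorem delta2_mk (w : Fin 3 → F) (a b : F) (u z : Fin 3 → F) :
    delta2 w ⟨a, u, z, b⟩ =
      ⟨a + u ⬝ᵥ w, u + z ⨯₃ w, (-a + b - u ⬝ᵥ w) • w + z, b - u ⬝ᵥ w⟩ := by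
  rw [← dot_eq_dotProduct]
  rfl

variable (w : Fin 3 → F)

theorem delta2_add (x y : Octo F) : delta2 w (x + y) = delta2 w x + delta2 w y := by
  obtain ⟨a, u, z, b⟩ := x
  obtain ⟨a', u', z', b'⟩ := y
  simp only [mk_add_mk, delta2_mk, Octo.mk.injEq, add_dotProduct, map_add, LinearMap.add_apply]
  exact ⟨by ring, by abel, by module, by ring⟩

theorem delta2_smul (c : F) (x : Octo F) : delta2 w (c • x) = c • delta2 w x := by
  obtain ⟨a, u, z, b⟩ := x
  simp only [smul_mk, delta2_mk, Octo.mk.injEq, smul_dotProduct, map_smul, LinearMap.smul_apply,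
    smul_eq_mul]
  exact ⟨by ring, by module, by module, by ring⟩

theorem delta2_neg_leftInverse :
    Function.LeftInverse (delta2 (-w)) (delta2 w : Octo F → Octo F) := by
  rintro ⟨a, u, z, b⟩
  simp only [delta2_mk, Octo.mk.injEq, add_dotProduct, dotProduct_neg, map_add, map_neg, map_smul,
    LinearMap.add_apply, LinearMap.smul_apply, cross_self, cross_dot_right_self]
  exact ⟨by ring, by module, by module, by ring⟩

theorem delta2_bijective : Function.Bijective (delta2 w : Octo F → Octo F) :=
  ⟨(delta2_neg_leftInverse w).injective,
    by simpa only [neg_neg] using (delta2_neg_leftInverse (-w)).surjective⟩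

theorem delta2_mul (x y : Octo F) : delta2 w (x * y) = delta2 w x * delta2 w y := by
  obtain ⟨a, u, z, b⟩ := x
  obtain ⟨a', u', z', b'⟩ := y
  have triple_zwz' : z ⨯₃ w ⬝ᵥ z' = -(z ⨯₃ z' ⬝ᵥ w) := cross_dot_comm z w z'
  have triple_zz'w : z ⬝ᵥ z' ⨯₃ w = z ⨯₃ z' ⬝ᵥ w := by
    rw [triple_product_permutation, triple_product_permutation, dotProduct_comm]
  have bac_cab_uu'w : u ⨯₃ u' ⨯₃ w = (u ⬝ᵥ w) • u' - (u' ⬝ᵥ w) • u :=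
    cross_cross_eq_smul_sub_smul u u' w
  have bac_cab_zwu' : z ⨯₃ w ⨯₃ u' = (z ⬝ᵥ u') • w - (u' ⬝ᵥ w) • z := by
    rw [cross_cross_eq_smul_sub_smul, dotProduct_comm w]
  have bac_cab_uz'w : u ⨯₃ (z' ⨯₃ w) = (u ⬝ᵥ w) • z' - (u ⬝ᵥ z') • w := by
    rw [cross_cross_eq_smul_sub_smul', dotProduct_comm z']
  have bac_cab_zwz'w : z ⨯₃ w ⨯₃ (z' ⨯₃ w) = (z ⨯₃ z' ⬝ᵥ w) • w := by
    rw [cross_cross_eq_smul_sub_smul', cross_dot_right_self, dotProduct_comm, triple_zwz']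
    module
  simp only [mk_mul_mk, delta2_mk, Octo.mk.injEq, add_dotProduct, sub_dotProduct, dotProduct_add,
    smul_dotProduct, dotProduct_smul, map_add, map_smul, LinearMap.add_apply,
    LinearMap.smul_apply, cross_self, smul_eq_mul, cross_dot_right_self, ← cross_anticomm z' w,
    smul_zero, add_zero, dotProduct_comm w, triple_zz'w, triple_zwz', bac_cab_uu'w, bac_cab_zwu',
    bac_cab_uz'w, bac_cab_zwz'w]
  exact ⟨by ring, by module, by module, by ring⟩

end OctoPaper

/-- For every `v ∈ F³` the map `δ₂(v)` is an `F`-algebra automorphism of the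
split octonions. -/
theorem delta2_isAut (F : Type*) [Field F] (v : Fin 3 → F) :
    IsAut (delta2 v : Octo F → Octo F) :=
  ⟨delta2_bijective v, delta2_add v, delta2_smul v, delta2_mul v⟩
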